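/- For every ρ > 0, the limit as n → ∞ of √n · (1 - e^{2/(n ρ²)} · erfc(√2/(√n · ρ))) equals (2√2)/(ρ√π). -/

import Mathlib

open Filter Set

/-- The complementary error function. -/
noncomputable def erfc (y : ℝ) : ℝ :=
  (2 / Real.sqrt Real.pi) * ∫ u in Set.Ioi y, Real.exp (-u ^ 2)

open Real MeasureTheory intervalIntegral in
lemma gauss_int : Integrable (fun u : ℝ => Real.exp (-u ^ 2)) := by
  simpa using integrable_exp_neg_mul_sq (by norm_num : (0:ℝ) < 1)

open Real MeasureTheory intervalIntegral in
lemma Ioi_split (y : ℝ) :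
    ∫ u in Set.Ioi y, Real.exp (-u ^ 2)
      = (∫ u in Set.Ioi (0:ℝ), Real.exp (-u ^ 2)) - ∫ u in (0:ℝ)..y, Real.exp (-u ^ 2) := by
  have h := gauss_int
  rcases le_or_gt 0 y with hy | hy
  · rw [intervalIntegral.integral_of_le hy, eq_sub_iff_add_eq, add_comm,
      ← setIntegral_union (Set.Ioc_disjoint_Ioi le_rfl) measurableSet_Ioi
        h.integrableOn h.integrableOn, Set.Ioc_union_Ioi_eq_Ioi hy]
  · rw [intervalIntegral.integral_of_ge hy.le, sub_neg_eq_add, add_comm,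
      ← setIntegral_union (Set.Ioc_disjoint_Ioi le_rfl) measurableSet_Ioi
        h.integrableOn h.integrableOn, Set.Ioc_union_Ioi_eq_Ioi hy.le]

open Real MeasureTheory in
lemma erfc_hasDerivAt (y : ℝ) :
    HasDerivAt erfc (-(2 / Real.sqrt Real.pi) * Real.exp (-y ^ 2)) y := by
  have hcont : Continuous fun u : ℝ => Real.exp (-u ^ 2) := by continuity
  have h1 : HasDerivAt (fun x => ∫ u in (0:ℝ)..x, Real.exp (-u ^ 2))
      (Real.exp (-y ^ 2)) y :=
    intervalIntegral.integral_hasDerivAt_right gauss_int.intervalIntegrable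
      hcont.aestronglyMeasurable.stronglyMeasurableAtFilter hcont.continuousAt
  have h2 : HasDerivAt (fun x => ∫ u in Set.Ioi x, Real.exp (-u ^ 2))
      (-Real.exp (-y ^ 2)) y := by
    have : HasDerivAt (fun x => (∫ u in Set.Ioi (0:ℝ), Real.exp (-u ^ 2))
        - ∫ u in (0:ℝ)..x, Real.exp (-u ^ 2)) (-Real.exp (-y ^ 2)) y := by
      exact ((hasDerivAt_const y _).sub h1).congr_deriv (zero_sub _)
    exact this.congr_of_eventuallyEq (Filter.Eventually.of_forall fun x => Ioi_split x)
  have := h2.const_mul (2 / Real.sqrt Real.pi)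
  exact this.congr_deriv (by ring)

open Real in
lemma erfc_zero : erfc 0 = 1 := by
  have h : ∫ u in Set.Ioi (0:ℝ), Real.exp (-u ^ 2) = Real.sqrt π / 2 := by
    simpa using integral_gaussian_Ioi 1
  rw [erfc, h]
  have hπ : Real.sqrt π ≠ 0 := by
    positivity
  field_simp

open Real in
lemma g_hasDerivAt :
    HasDerivAt (fun x : ℝ => Real.exp (x ^ 2) * erfc x) (-(2 / Real.sqrt π)) 0 := by
  have h1 : HasDerivAt (fun x : ℝ => Real.exp (x ^ 2)) 0 0 := by
    have : HasDerivAt (fun x : ℝ => x ^ 2) 0 0 := by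
      simpa using (hasDerivAt_pow 2 (0:ℝ))
    simpa using this.exp
  have := h1.mul (erfc_hasDerivAt 0)
  exact this.congr_deriv (by simp [erfc_zero])

theorem sqrt_n_mul_one_sub_fn_zero_tendsto (ρ : ℝ) (hρ : 0 < ρ) :
    Tendsto (fun n : ℕ =>
        Real.sqrt n *
          (1 - Real.exp (2 / (n * ρ ^ 2)) * erfc (Real.sqrt 2 / (Real.sqrt n * ρ))))
      atTop (nhds (2 * Real.sqrt 2 / (ρ * Real.sqrt Real.pi))) := by
  have hslope : Tendsto (fun x : ℝ => (1 - Real.exp (x ^ 2) * erfc x) / x)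
      (nhdsWithin 0 {(0:ℝ)}ᶜ) (nhds (2 / Real.sqrt Real.pi)) := by
    have h := (hasDerivAt_iff_tendsto_slope.mp g_hasDerivAt)
    have : Tendsto (fun x : ℝ => -slope (fun x : ℝ => Real.exp (x ^ 2) * erfc x) 0 x)
        (nhdsWithin 0 {(0:ℝ)}ᶜ) (nhds (2 / Real.sqrt Real.pi)) := by
      simpa using h.neg
    refine this.congr fun x => ?_
    simp [slope_def_field, erfc_zero, div_eq_div_iff]
    ring
  have hx : Tendsto (fun n : ℕ => Real.sqrt 2 / (Real.sqrt n * ρ)) atTop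
      (nhdsWithin 0 {(0:ℝ)}ᶜ) := by
    rw [tendsto_nhdsWithin_iff]
    constructor
    · have hsqrt : Tendsto Real.sqrt atTop atTop := by
        rw [show Real.sqrt = fun x : ℝ => x ^ ((1:ℝ)/2) from funext Real.sqrt_eq_rpow]
        exact tendsto_rpow_atTop (by norm_num)
      have hn : Tendsto (fun n : ℕ => Real.sqrt n * ρ) atTop atTop :=
        (hsqrt.comp tendsto_natCast_atTop_atTop).atTop_mul_const hρ
      have h0 := hn.inv_tendsto_atTop.const_mul (Real.sqrt 2)
      simpa [div_eq_mul_inv] using h0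
    · filter_upwards [eventually_ge_atTop 1] with n hn
      have hn' : (0:ℝ) < Real.sqrt n := Real.sqrt_pos.mpr (by exact_mod_cast hn)
      have : Real.sqrt 2 / (Real.sqrt n * ρ) ≠ 0 := by positivity
      simpa using this
  have hmain := (hslope.comp hx).const_mul (Real.sqrt 2 / ρ)
  have heq : (fun n : ℕ => Real.sqrt 2 / ρ *
      ((1 - Real.exp ((Real.sqrt 2 / (Real.sqrt n * ρ)) ^ 2) *
        erfc (Real.sqrt 2 / (Real.sqrt n * ρ))) / (Real.sqrt 2 / (Real.sqrt n * ρ))))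
      =ᶠ[atTop] (fun n : ℕ =>
        Real.sqrt n *
          (1 - Real.exp (2 / (n * ρ ^ 2)) * erfc (Real.sqrt 2 / (Real.sqrt n * ρ)))) := by
    filter_upwards [eventually_ge_atTop 1] with n hn
    have hn' : (0:ℝ) < Real.sqrt n := Real.sqrt_pos.mpr (by exact_mod_cast hn)
    have hsq : (Real.sqrt 2 / (Real.sqrt n * ρ)) ^ 2 = 2 / (n * ρ ^ 2) := by
      rw [div_pow, mul_pow, Real.sq_sqrt (by norm_num : (2:ℝ) ≥ 0),
        Real.sq_sqrt (by positivity : (0:ℝ) ≤ (n:ℝ))]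
    rw [hsq]
    have h2 : (0:ℝ) < Real.sqrt 2 := by positivity
    field_simp
  have hlim : Real.sqrt 2 / ρ * (2 / Real.sqrt Real.pi)
      = 2 * Real.sqrt 2 / (ρ * Real.sqrt Real.pi) := by ring
  rw [← hlim]
  exact hmain.congr' heq
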